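/- Let X be a finite-dimensional real vector space and let p and p' be two right bounded asymmetric norms on X. Then p and p' are equivalent if and only if θ_p = θ_{p'}. -/

import Mathlib

open Pointwise Set

/-- An asymmetric norm on a real vector space `X`. -/
structure IsAsymmetricNorm {X : Type*} [AddCommGroup X] [Module ℝ X] (q : X → ℝ) : Prop where
  nonneg : ∀ x, 0 ≤ q x
  smul_eq : ∀ a : ℝ, 0 ≤ a → ∀ x, q (a • x) = a * q x
  add_le : ∀ x y, q (x + y) ≤ q x + q y
  eq_zero : ∀ x, q x = 0 → q (-x) = 0 → x = 0

/-- The topology `τ_q` generated by the open balls of `q`. -/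
def asymTop {X : Type*} [AddCommGroup X] [Module ℝ X] (q : X → ℝ) : TopologicalSpace X :=
  TopologicalSpace.generateFrom {U | ∃ x : X, ∃ ε : ℝ, 0 < ε ∧ U = {y | q (y - x) < ε}}

/-- The symmetrization `q^s` of `q`. -/
def symNorm {X : Type*} [AddCommGroup X] (q : X → ℝ) (x : X) : ℝ := max (q x) (q (-x))

/-- The cone `θ_q = {x : q x = 0}`. -/
def theta {X : Type*} [AddCommGroup X] (q : X → ℝ) : Set X := {x | q x = 0}

/-- The closed ball `B_r^q[x] = {y : q (y - x) ≤ r}`. -/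
def closedBallA {X : Type*} [AddCommGroup X] (q : X → ℝ) (x : X) (r : ℝ) : Set X :=
  {y | q (y - x) ≤ r}

/-- A set `K` is strongly compact (w.r.t. the asymmetric norm `q`) if there is a set `S`,
compact in the topology of the norm `q^s`, with `S ⊆ K ⊆ S + θ_q`. -/
def StronglyCompact {X : Type*} [AddCommGroup X] [Module ℝ X] (q : X → ℝ) (K : Set X) : Prop :=
  ∃ S : Set X, @IsCompact X (asymTop (symNorm q)) S ∧ S ⊆ K ∧ K ⊆ S + theta q

/-- `q` is right bounded if `r • B_1^q[0] ⊆ B_1^{q^s}[0] + θ_q` for some `r > 0`. -/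
def RightBounded {X : Type*} [AddCommGroup X] [Module ℝ X] (q : X → ℝ) : Prop :=
  ∃ r : ℝ, 0 < r ∧ r • closedBallA q 0 1 ⊆ closedBallA (symNorm q) 0 1 + theta q

/-- `q` is 1-bounded if `B_1^q[0] ⊆ B_1^{q^s}[0] + θ_q`. -/
def OneBounded {X : Type*} [AddCommGroup X] [Module ℝ X] (q : X → ℝ) : Prop :=
  closedBallA q 0 1 ⊆ closedBallA (symNorm q) 0 1 + theta q

/-- Two asymmetric norms are equivalent if `κ·q ≤ p ≤ l·q` for some `κ, l > 0`. -/
def EquivNorms {X : Type*} [AddCommGroup X] (p q : X → ℝ) : Prop :=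
  ∃ κ l : ℝ, 0 < κ ∧ 0 < l ∧ ∀ x, κ * q x ≤ p x ∧ p x ≤ l * q x

/-- `X` is strongly locally compact (w.r.t. `τ_q`) if every point has a local base of
strongly compact sets. -/
def StronglyLocallyCompact {X : Type*} [AddCommGroup X] [Module ℝ X] (q : X → ℝ) : Prop :=
  ∀ x : X, ∀ U ∈ @nhds X (asymTop q) x,
    ∃ K : Set X, StronglyCompact q K ∧ K ∈ @nhds X (asymTop q) x ∧ K ⊆ U

/-!
In finite dimension an asymmetric norm `p` is bounded by `C · q^s` for any other one `q`, since
`p^s` is convex and therefore continuous for the norm `q^s`. If moreover `q` is right bounded and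
`θ_q ⊆ θ_p`, write `r • y = c + s` for `q y ≤ 1` with `q^s c ≤ 1` and `s ∈ θ_q`; then
`r · p y ≤ p c ≤ C`, so `p ≤ (C / r) · q`. Applying this both ways gives the equivalence.
-/

section

variable {X : Type*} [AddCommGroup X] [Module ℝ X] {p q : X → ℝ}

namespace IsAsymmetricNorm

lemma map_zero (hq : IsAsymmetricNorm q) : q 0 = 0 := by
  simpa using hq.smul_eq 0 le_rfl 0

lemma symNorm_smul (hq : IsAsymmetricNorm q) (a : ℝ) (x : X) :
    symNorm q (a • x) = |a| * symNorm q x := by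
  rcases le_or_gt 0 a with ha | ha
  · rw [symNorm, symNorm, ← smul_neg, hq.smul_eq a ha, hq.smul_eq a ha, abs_of_nonneg ha,
      mul_max_of_nonneg _ _ ha]
  · have ha' : 0 ≤ -a := by linarith
    have h₁ : a • x = (-a) • -x := by rw [smul_neg, neg_smul, neg_neg]
    have h₂ : -(a • x) = (-a) • x := (neg_smul a x).symm
    rw [symNorm, symNorm, h₂, h₁, hq.smul_eq _ ha', hq.smul_eq _ ha', abs_of_neg ha,
      mul_max_of_nonneg _ _ ha', max_comm]

def symSeminorm (hq : IsAsymmetricNorm q) : Seminorm ℝ X where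
  toFun := symNorm q
  map_zero' := by simp [symNorm, hq.map_zero]
  add_le' x y := max_le
    ((hq.add_le x y).trans (add_le_add (le_max_left _ _) (le_max_left _ _)))
    (by
      rw [neg_add]
      exact (hq.add_le _ _).trans (add_le_add (le_max_right _ _) (le_max_right _ _)))
  neg' x := by simp [symNorm, max_comm]
  smul' := hq.symNorm_smul

lemma symNorm_eq_zero (hq : IsAsymmetricNorm q) {x : X} (hx : symNorm q x = 0) : x = 0 :=
  hq.eq_zero x (le_antisymm (hx ▸ le_max_left _ _) (hq.nonneg x))
    (le_antisymm (hx ▸ le_max_right _ _) (hq.nonneg (-x)))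

abbrev toNormedAddCommGroup (hq : IsAsymmetricNorm q) : NormedAddCommGroup X :=
  AddGroupNorm.toNormedAddCommGroup
    { hq.symSeminorm.toAddGroupSeminorm with
      eq_zero_of_map_eq_zero' := fun _ => hq.symNorm_eq_zero }

theorem exists_le_mul_symNorm [FiniteDimensional ℝ X] (hp : IsAsymmetricNorm p)
    (hq : IsAsymmetricNorm q) : ∃ C, 0 < C ∧ ∀ x, q x ≤ C * symNorm p x := by
  let := hp.toNormedAddCommGroup
  let : NormedSpace ℝ X := ⟨fun a x => (hp.symSeminorm.smul' a x).le⟩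
  obtain ⟨C, hC, hle⟩ := hq.symSeminorm.bound_of_continuous_normedSpace
    hq.symSeminorm.convexOn.locallyLipschitz.continuous
  exact ⟨C, hC, fun x => (le_max_left _ _).trans (hle x)⟩

lemma le_mul_of_forall_le_one (hp : IsAsymmetricNorm p) (hq : IsAsymmetricNorm q)
    (hθ : theta q ⊆ theta p) {M : ℝ} (hM : ∀ y, q y ≤ 1 → p y ≤ M) (x : X) :
    p x ≤ M * q x := by
  rcases (hq.nonneg x).eq_or_lt with hx | hx
  · rw [← hx, mul_zero, show p x = 0 from hθ hx.symm]
  · have hy := hM ((q x)⁻¹ • x) <| by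
      rw [hq.smul_eq _ (inv_nonneg.2 hx.le), inv_mul_cancel₀ hx.ne']
    rw [hp.smul_eq _ (inv_nonneg.2 hx.le), inv_mul_le_iff₀ hx] at hy
    linarith

end IsAsymmetricNorm

lemma EquivNorms.theta_eq (hp : IsAsymmetricNorm p) (hq : IsAsymmetricNorm q)
    (h : EquivNorms p q) : theta p = theta q := by
  obtain ⟨κ, l, hκ, hl, h⟩ := h
  ext x
  obtain ⟨hlow, hup⟩ := h x
  change p x = 0 ↔ q x = 0
  constructor <;> intro hx <;> nlinarith [hp.nonneg x, hq.nonneg x]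

theorem RightBounded.exists_le_mul [FiniteDimensional ℝ X] (hp : IsAsymmetricNorm p)
    (hq : IsAsymmetricNorm q) (hrb : RightBounded q) (hθ : theta q ⊆ theta p) :
    ∃ l, 0 < l ∧ ∀ x, p x ≤ l * q x := by
  obtain ⟨C, hC, hpC⟩ := hq.exists_le_mul_symNorm hp
  obtain ⟨r, hr, hball⟩ := hrb
  refine ⟨C / r, div_pos hC hr, hp.le_mul_of_forall_le_one hq hθ fun y hy => ?_⟩
  have hry : r • y ∈ r • closedBallA q 0 1 := smul_mem_smul_set (by simpa [closedBallA] using hy)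
  obtain ⟨c, hc, s, hs, hcs⟩ := mem_add.1 (hball hry)
  have hc : symNorm q c ≤ 1 := by simpa [closedBallA] using hc
  have hps : p s = 0 := hθ hs
  have : r * p y ≤ C := calc
    r * p y = p (c + s) := by rw [hcs, hp.smul_eq r hr.le]
    _ ≤ p c + p s := hp.add_le c s
    _ ≤ C * 1 := by rw [hps, add_zero]; exact (hpC c).trans (by gcongr)
    _ = C := mul_one C
  rwa [le_div_iff₀' hr]

end

theorem statement15 {X : Type*} [AddCommGroup X] [Module ℝ X] [FiniteDimensional ℝ X]
    (p p' : X → ℝ) (hp : IsAsymmetricNorm p) (hp' : IsAsymmetricNorm p')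
    (hrb : RightBounded p) (hrb' : RightBounded p') :
    EquivNorms p p' ↔ theta p = theta p' := by
  refine ⟨EquivNorms.theta_eq hp hp', fun hθ => ?_⟩
  obtain ⟨l, hl, hle⟩ := hrb'.exists_le_mul hp hp' hθ.ge
  obtain ⟨l', hl', hle'⟩ := hrb.exists_le_mul hp' hp hθ.le
  exact ⟨l'⁻¹, l, inv_pos.2 hl', hl, fun x => ⟨(inv_mul_le_iff₀ hl').2 (hle' x), hle x⟩⟩
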